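/- Let X and Y be random variables on a probability space with 0 ≤ Y ≤ X almost surely and X > 0 almost surely, and let c ∈ [0,∞). If lim_{λ↓0} E[ (Y/X)(1 − e^{−λX}) ] / ( λ log(1/λ) ) = c, then lim_{λ↓0} E[ Y e^{−λX} ] / log(1/λ) = c. (All expectations here are finite for λ ∈ (0, e^{−1}): indeed (Y/X)(1 − e^{−λX}) ≤ λ ∧ 1 and Y e^{−λX} ≤ X e^{−λX} ≤ (eλ)^{−1}.) -/

import Mathlib

/-!
Write `f λ = E[(Y/X)(1 − e^{−λX})]` and `g λ = E[Y e^{−λX}]`. Pointwise in `ω`, the elementary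
inequalities `t e^{−t} ≤ 1 − e^{−t} ≤ t` give `λ g λ ≤ f λ` and `f (2λ) − f λ ≤ λ g λ`: the
integrated form of the concavity of `f`, whose derivative is the decreasing function `g`.
Dividing by `λ log(1/λ)` traps `g λ / log(1/λ)` between `(f (2λ) − f λ)/(λ log(1/λ))` and
`f λ/(λ log(1/λ))`, and both tend to `c` because `log(1/(2λ)) ∼ log(1/λ)`.
-/

open MeasureTheory Filter Topology Real

lemma mul_exp_neg_le_one_sub_exp_neg (t : ℝ) : t * exp (-t) ≤ 1 - exp (-t) := by
  have h := mul_le_mul_of_nonneg_left (add_one_le_exp t) (exp_pos (-t)).le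
  rw [← exp_add, neg_add_cancel, exp_zero] at h
  linarith

lemma tendsto_log_one_div_nhdsGT_zero :
    Tendsto (fun l : ℝ => log (1 / l)) (𝓝[>] 0) atTop := by
  simpa [Function.comp_def, one_div] using tendsto_log_atTop.comp tendsto_inv_nhdsGT_zero

lemma tendsto_log_one_div_mul_div_log_one_div {a : ℝ} (ha : 0 < a) :
    Tendsto (fun l : ℝ => log (1 / (a * l)) / log (1 / l)) (𝓝[>] 0) (𝓝 1) := by
  have hlim : Tendsto (fun l : ℝ => 1 - log a / log (1 / l)) (𝓝[>] 0) (𝓝 1) := by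
    simpa using tendsto_const_nhds.sub
      ((tendsto_const_nhds (x := log a)).div_atTop tendsto_log_one_div_nhdsGT_zero)
  refine hlim.congr' ?_
  filter_upwards [tendsto_log_one_div_nhdsGT_zero.eventually_gt_atTop 0,
    self_mem_nhdsWithin] with l hL (hl : 0 < l)
  have hsplit : log (1 / (a * l)) = log (1 / l) - log a := by
    rw [one_div, one_div, mul_inv, log_mul (inv_ne_zero ha.ne') (inv_ne_zero hl.ne'), log_inv]
    ring
  rw [hsplit]
  field_simp

lemma tendsto_two_mul_nhdsGT_zero : Tendsto (fun l : ℝ => 2 * l) (𝓝[>] 0) (𝓝[>] 0) :=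
  tendsto_nhdsWithin_of_tendsto_nhds_of_eventually_within _
    (((continuous_const_mul 2).tendsto' 0 0 (mul_zero 2)).mono_left nhdsWithin_le_nhds)
    (eventually_nhdsWithin_of_forall fun l (hl : 0 < l) => mul_pos two_pos hl)

theorem tendsto_div_log_one_div_of_doubling {f g : ℝ → ℝ} {c : ℝ}
    (hlow : ∀ᶠ l in 𝓝[>] 0, l * g l ≤ f l)
    (hup : ∀ᶠ l in 𝓝[>] 0, f (2 * l) - f l ≤ l * g l)
    (hf : Tendsto (fun l => f l / (l * log (1 / l))) (𝓝[>] 0) (𝓝 c)) :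
    Tendsto (fun l => g l / log (1 / l)) (𝓝[>] 0) (𝓝 c) := by
  have hL := tendsto_log_one_div_nhdsGT_zero.eventually_gt_atTop 0
  have hL2 := tendsto_two_mul_nhdsGT_zero.eventually hL
  have hpos : ∀ᶠ l in 𝓝[>] (0 : ℝ), 0 < l := self_mem_nhdsWithin
  have hf2 : Tendsto (fun l => f (2 * l) / (l * log (1 / l))) (𝓝[>] 0) (𝓝 (2 * c)) := by
    have := ((hf.comp tendsto_two_mul_nhdsGT_zero).const_mul 2).mul
      (tendsto_log_one_div_mul_div_log_one_div two_pos)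
    rw [mul_one] at this
    refine this.congr' ?_
    filter_upwards [hpos, hL, hL2] with l hl hL hL2
    simp only [Function.comp_apply]
    field_simp
  have hg : ∀ᶠ l in 𝓝[>] (0 : ℝ), g l / log (1 / l) = l * g l / (l * log (1 / l)) := by
    filter_upwards [hpos] with l hl using (mul_div_mul_left _ _ hl.ne').symm
  have hdiff : Tendsto (fun l => (f (2 * l) - f l) / (l * log (1 / l))) (𝓝[>] 0) (𝓝 c) := by
    simpa only [sub_div, two_mul, add_sub_cancel_right] using hf2.sub hf
  refine tendsto_of_tendsto_of_tendsto_of_le_of_le' hdiff hf ?_ ?_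
  · filter_upwards [hpos, hL, hup, hg] with l hl hL hup hg
    rw [hg]
    gcongr
  · filter_upwards [hpos, hL, hlow, hg] with l hl hL hlow hg
    rw [hg]
    gcongr

section Laplace

variable {Ω : Type*} [MeasurableSpace Ω] {P : Measure Ω} {X Y : Ω → ℝ}

lemma integrable_mul_exp_neg_mul [IsFiniteMeasure P] (hX : AEMeasurable X P)
    (hY : AEMeasurable Y P) (hYX : ∀ᵐ ω ∂P, 0 ≤ Y ω ∧ Y ω ≤ X ω) {l : ℝ} (hl : 0 < l) :
    Integrable (fun ω => Y ω * exp (-(l * X ω))) P := by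
  refine Integrable.mono' (integrable_const (exp (-1) / l)) (by fun_prop) ?_
  filter_upwards [hYX] with ω ⟨hY0, hYle⟩
  rw [norm_of_nonneg (by positivity), le_div_iff₀ hl]
  calc Y ω * exp (-(l * X ω)) * l ≤ X ω * exp (-(l * X ω)) * l := by gcongr
    _ = l * X ω * exp (-(l * X ω)) := by ring
    _ ≤ exp (-1) := mul_exp_neg_le_exp_neg_one _

lemma integrable_div_mul_one_sub_exp_neg_mul [IsFiniteMeasure P] (hX : AEMeasurable X P)
    (hY : AEMeasurable Y P) (hYX : ∀ᵐ ω ∂P, 0 ≤ Y ω ∧ Y ω ≤ X ω) (hXpos : ∀ᵐ ω ∂P, 0 < X ω)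
    {l : ℝ} (hl : 0 ≤ l) :
    Integrable (fun ω => Y ω / X ω * (1 - exp (-(l * X ω)))) P := by
  refine Integrable.mono' (integrable_const 1) (by fun_prop) ?_
  filter_upwards [hYX, hXpos] with ω ⟨hY0, hYle⟩ hX0
  have hexp : exp (-(l * X ω)) ≤ 1 := exp_le_one_iff.2 (by nlinarith)
  rw [norm_of_nonneg (mul_nonneg (by positivity) (by linarith))]
  calc Y ω / X ω * (1 - exp (-(l * X ω))) ≤ 1 * 1 := by
        gcongr
        · exact (div_le_one hX0).2 hYle
        · linarith [exp_pos (-(l * X ω))]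
    _ = 1 := one_mul 1

lemma mul_integral_mul_exp_neg_mul_le [IsFiniteMeasure P] (hX : AEMeasurable X P)
    (hY : AEMeasurable Y P) (hYX : ∀ᵐ ω ∂P, 0 ≤ Y ω ∧ Y ω ≤ X ω) (hXpos : ∀ᵐ ω ∂P, 0 < X ω)
    {l : ℝ} (hl : 0 < l) :
    l * ∫ ω, Y ω * exp (-(l * X ω)) ∂P ≤ ∫ ω, Y ω / X ω * (1 - exp (-(l * X ω))) ∂P := by
  rw [← integral_const_mul]
  refine integral_mono_ae ((integrable_mul_exp_neg_mul hX hY hYX hl).const_mul l)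
    (integrable_div_mul_one_sub_exp_neg_mul hX hY hYX hXpos hl.le) ?_
  filter_upwards [hYX, hXpos] with ω ⟨hY0, _⟩ hX0
  calc l * (Y ω * exp (-(l * X ω))) = Y ω / X ω * (l * X ω * exp (-(l * X ω))) := by
        field_simp
    _ ≤ Y ω / X ω * (1 - exp (-(l * X ω))) := by
        gcongr
        exact mul_exp_neg_le_one_sub_exp_neg _

lemma integral_div_mul_one_sub_exp_neg_two_mul_sub_le [IsFiniteMeasure P] (hX : AEMeasurable X P)
    (hY : AEMeasurable Y P) (hYX : ∀ᵐ ω ∂P, 0 ≤ Y ω ∧ Y ω ≤ X ω) (hXpos : ∀ᵐ ω ∂P, 0 < X ω)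
    {l : ℝ} (hl : 0 < l) :
    ∫ ω, Y ω / X ω * (1 - exp (-(2 * l * X ω))) ∂P
        - ∫ ω, Y ω / X ω * (1 - exp (-(l * X ω))) ∂P
      ≤ l * ∫ ω, Y ω * exp (-(l * X ω)) ∂P := by
  rw [← integral_sub (integrable_div_mul_one_sub_exp_neg_mul hX hY hYX hXpos (by positivity))
    (integrable_div_mul_one_sub_exp_neg_mul hX hY hYX hXpos hl.le), ← integral_const_mul]
  refine integral_mono_ae ((integrable_div_mul_one_sub_exp_neg_mul hX hY hYX hXpos
    (by positivity)).sub (integrable_div_mul_one_sub_exp_neg_mul hX hY hYX hXpos hl.le))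
    ((integrable_mul_exp_neg_mul hX hY hYX hl).const_mul l) ?_
  filter_upwards [hYX, hXpos] with ω ⟨hY0, _⟩ hX0
  have hsq : exp (-(2 * l * X ω)) = exp (-(l * X ω)) * exp (-(l * X ω)) := by
    rw [← exp_add]; ring_nf
  calc Y ω / X ω * (1 - exp (-(2 * l * X ω))) - Y ω / X ω * (1 - exp (-(l * X ω)))
      = Y ω / X ω * exp (-(l * X ω)) * (1 - exp (-(l * X ω))) := by rw [hsq]; ring
    _ ≤ Y ω / X ω * exp (-(l * X ω)) * (l * X ω) := by
        gcongr
        linarith [one_sub_le_exp_neg (l * X ω)]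
    _ = l * (Y ω * exp (-(l * X ω))) := by field_simp

end Laplace

theorem laplace_tauberian_step_general
    {Ω : Type*} [MeasurableSpace Ω] (P : Measure Ω) [IsProbabilityMeasure P]
    (X Y : Ω → ℝ) (hXmeas : Measurable X) (hYmeas : Measurable Y)
    (hYX : ∀ᵐ ω ∂P, 0 ≤ Y ω ∧ Y ω ≤ X ω)
    (hXpos : ∀ᵐ ω ∂P, 0 < X ω)
    (c : ℝ)
    (hyp : Tendsto (fun l : ℝ =>
        (∫ ω, (Y ω / X ω) * (1 - Real.exp (-(l * X ω))) ∂P) / (l * Real.log (1 / l)))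
      (𝓝[>] 0) (𝓝 c)) :
    Tendsto (fun l : ℝ =>
        (∫ ω, Y ω * Real.exp (-(l * X ω)) ∂P) / Real.log (1 / l))
      (𝓝[>] 0) (𝓝 c) := by
  have hpos : ∀ᶠ l in 𝓝[>] (0 : ℝ), 0 < l := self_mem_nhdsWithin
  refine tendsto_div_log_one_div_of_doubling ?_ ?_ hyp
  · filter_upwards [hpos] with l hl using mul_integral_mul_exp_neg_mul_le
      hXmeas.aemeasurable hYmeas.aemeasurable hYX hXpos hl
  · filter_upwards [hpos] with l hl using integral_div_mul_one_sub_exp_neg_two_mul_sub_le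
      hXmeas.aemeasurable hYmeas.aemeasurable hYX hXpos hl

/-- **Tauberian step for the Laplace-transform asymptotics**: if `0 ≤ Y ≤ X` a.s. and
`X > 0` a.s., and `E[(Y/X)(1 − e^{−λX})]/(λ log(1/λ)) → c` as `λ ↓ 0`, then
`E[Y e^{−λX}]/log(1/λ) → c` as `λ ↓ 0`. -/
theorem laplace_tauberian_step
    {Ω : Type*} [MeasurableSpace Ω] (P : Measure Ω) [IsProbabilityMeasure P]
    (X Y : Ω → ℝ) (hXmeas : Measurable X) (hYmeas : Measurable Y)
    (hYX : ∀ᵐ ω ∂P, 0 ≤ Y ω ∧ Y ω ≤ X ω)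
    (hXpos : ∀ᵐ ω ∂P, 0 < X ω)
    (c : ℝ) (hc : 0 ≤ c)
    (hyp : Tendsto (fun l : ℝ =>
        (∫ ω, (Y ω / X ω) * (1 - Real.exp (-(l * X ω))) ∂P) / (l * Real.log (1 / l)))
      (𝓝[>] 0) (𝓝 c)) :
    Tendsto (fun l : ℝ =>
        (∫ ω, Y ω * Real.exp (-(l * X ω)) ∂P) / Real.log (1 / l))
      (𝓝[>] 0) (𝓝 c) :=
  laplace_tauberian_step_general P X Y hXmeas hYmeas hYX hXpos c hyp
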